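/- Let A, B, C be finite-dimensional complex vector spaces with dim A = a, and let T ∈ A ⊗ B ⊗ C have rank at most r. Then rank(T_A^{∧p}) ≤ r · C(a−1, p). -/

import Mathlib

/-!
Since `T ↦ T_A^{∧p}` is additive and the rank of a sum of linear maps is at most the sum of
their ranks, it suffices to treat a rank-one tensor `a ⊗ b ⊗ c`, for which
`T_A^{∧p}(β ⊗ w) = β(b) • (a ∧ w) ⊗ c`; its rank is at most that of `w ↦ a ∧ w` on `Λ^p A`.
For `a ≠ 0` write `A = ℂa ⊕ A'`: since `a ∧ a = 0`, wedging with `a` ignores the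
`ℂa`-components of the factors of `w`, so `a ∧ Λ^p A = a ∧ Λ^p A'`, which has dimension at most
`dim Λ^p A' = C(a-1, p)`.
-/

open TensorProduct

noncomputable section
namespace LO

variable {A B C : Type*} [AddCommGroup A] [Module ℂ A] [AddCommGroup B] [Module ℂ B]
  [AddCommGroup C] [Module ℂ C]

/-- The rank of a tensor `T ∈ A ⊗ B ⊗ C`: the least `r` such that `T` is a sum of `r`
decomposable (rank-one) tensors. -/
def tensorRank (T : A ⊗[ℂ] (B ⊗[ℂ] C)) : ℕ :=
  sInf {r : ℕ | ∃ (a : Fin r → A) (b : Fin r → B) (c : Fin r → C),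
    T = ∑ i, a i ⊗ₜ[ℂ] (b i ⊗ₜ[ℂ] c i)}

/-- The flattening `T_B : B^* → A ⊗ C` of a tensor `T ∈ A ⊗ B ⊗ C`, characterized by
`T_B(β) = (id_A ⊗ β ⊗ id_C)(T)`. -/
def flatB (T : A ⊗[ℂ] (B ⊗[ℂ] C)) : Module.Dual ℂ B →ₗ[ℂ] A ⊗[ℂ] C :=
  dualTensorHom ℂ (Module.Dual ℂ B) (A ⊗[ℂ] C)
    ((TensorProduct.map (Module.Dual.eval ℂ B) LinearMap.id)
      ((TensorProduct.leftComm ℂ A B C) T))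

/-- The `k`-th exterior power `Λ^k M` (as a submodule of the exterior algebra). -/
def ExtPow (k : ℕ) (M : Type*) [AddCommGroup M] [Module ℂ M] :
    Submodule ℂ (ExteriorAlgebra ℂ M) := ⋀[ℂ]^k M

/-- Wedge of a vector with an element of the `p`-th exterior power. -/
def wedgeAux (p : ℕ) (a : A) (w : ExtPow p A) : ExtPow (p+1) A :=
  ⟨ExteriorAlgebra.ι ℂ a * (w : ExteriorAlgebra ℂ A), by
    have h1 : ExteriorAlgebra.ι ℂ a ∈ ⋀[ℂ]^1 A := by
      show ExteriorAlgebra.ι ℂ a ∈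
        (LinearMap.range (ExteriorAlgebra.ι ℂ : A →ₗ[ℂ] ExteriorAlgebra ℂ A)) ^ 1
      rw [pow_one]; exact LinearMap.mem_range_self _ a
    have h2 : (w : ExteriorAlgebra ℂ A) ∈ ⋀[ℂ]^p A := w.2
    have h := SetLike.mul_mem_graded h1 h2
    rw [Nat.add_comm 1 p] at h
    exact h⟩

/-- The wedge (skew-symmetrization) product as a bilinear map `A → Λ^p A → Λ^{p+1} A`. -/
def wedgeMap (p : ℕ) : A →ₗ[ℂ] (↥(ExtPow p A) →ₗ[ℂ] ↥(ExtPow (p+1) A)) :=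
  LinearMap.mk₂ ℂ (wedgeAux p)
    (fun a₁ a₂ w => Subtype.ext (by simp [wedgeAux, add_mul]))
    (fun c a w => Subtype.ext (by simp [wedgeAux, smul_mul_assoc]))
    (fun a w₁ w₂ => Subtype.ext (by simp [wedgeAux, mul_add]))
    (fun c a w => Subtype.ext (by simp [wedgeAux, mul_smul_comm]))

/-- The map `T_A^{∧p} : B^* ⊗ Λ^p A → Λ^{p+1} A ⊗ C`, obtained from the flattening `T_B`
by tensoring with the identity of `Λ^p A` and skew-symmetrizing the `A ⊗ Λ^p A` factor. -/
def TAp (p : ℕ) (T : A ⊗[ℂ] (B ⊗[ℂ] C)) :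
    (Module.Dual ℂ B) ⊗[ℂ] ↥(ExtPow p A) →ₗ[ℂ] ↥(ExtPow (p+1) A) ⊗[ℂ] C :=
  (TensorProduct.map (TensorProduct.lift (wedgeMap (A := A) p)) (LinearMap.id : C →ₗ[ℂ] C))
  ∘ₗ ((TensorProduct.assoc ℂ A (↥(ExtPow p A)) C).symm.toLinearMap)
  ∘ₗ (TensorProduct.congr (LinearEquiv.refl ℂ A)
        (TensorProduct.comm ℂ C (↥(ExtPow p A)))).toLinearMap
  ∘ₗ (TensorProduct.assoc ℂ A C (↥(ExtPow p A))).toLinearMap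
  ∘ₗ (TensorProduct.map (flatB T) (LinearMap.id : ↥(ExtPow p A) →ₗ[ℂ] ↥(ExtPow p A)))


theorem _root_.MultilinearMap.map_eq_of_forall_sub_mem {R ι M N : Type*} [Ring R]
    [AddCommGroup M] [Module R M] [AddCommMonoid N] [Module R N] [Fintype ι] [DecidableEq ι]
    (g : MultilinearMap R (fun _ : ι => M) N) (K : Submodule R M)
    (hg : ∀ v i, ∀ k ∈ K, g (Function.update v i k) = 0) {v w : ι → M}
    (hvw : ∀ i, v i - w i ∈ K) : g v = g w := by
  rw [show v = w + (v - w) by simp, g.map_add_univ, Finset.sum_eq_single Finset.univ]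
  · simp
  · intro s _ hs
    obtain ⟨i, hi⟩ : ∃ i, i ∉ s := by simpa [Finset.eq_univ_iff_forall] using hs
    have hsi : s.piecewise w (v - w) i = v i - w i := Finset.piecewise_eq_of_notMem _ _ _ hi
    simpa [← hsi] using hg (s.piecewise w (v - w)) i _ (hvw i)
  · simp

theorem _root_.ExteriorAlgebra.ι_mul_ιMulti_update_of_mem_span_singleton {R M : Type*}
    [CommRing R] [AddCommGroup M] [Module R M] {n : ℕ} (x : M) (v : Fin n → M) (i : Fin n)
    {k : M} (hk : k ∈ R ∙ x) :
    ExteriorAlgebra.ι R x * ExteriorAlgebra.ιMulti R n (Function.update v i k) = 0 := by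
  obtain ⟨c, rfl⟩ := Submodule.mem_span_singleton.1 hk
  have hcons : ExteriorAlgebra.ι R x * ExteriorAlgebra.ιMulti R n (Function.update v i x) =
      ExteriorAlgebra.ιMulti R (n + 1) (Fin.cons x (Function.update v i x)) := by
    simp only [ExteriorAlgebra.ιMulti_succ_apply, Fin.cons_zero, Matrix.vecTail,
      Function.comp_def, Fin.cons_succ]
  rw [AlternatingMap.map_update_smul, mul_smul_comm, hcons, Fin.cons_update,
    AlternatingMap.map_eq_zero_of_eq _ _ (i := 0) (j := i.succ)
      (by rw [Function.update_of_ne (Fin.succ_ne_zero i).symm, Function.update_self, Fin.cons_zero])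
      (Fin.succ_ne_zero i).symm, smul_zero]

lemma wedgeMap_comp_map_of_sub_mem (p : ℕ) (a : A) {π : A →ₗ[ℂ] A} (hπ : ∀ v, v - π v ∈ ℂ ∙ a) :
    wedgeMap p a ∘ₗ exteriorPower.map p π = wedgeMap p a := by
  ext v
  show (wedgeMap p a (exteriorPower.map p π (exteriorPower.ιMulti ℂ p v)) : ExteriorAlgebra ℂ A) =
    wedgeMap p a (exteriorPower.ιMulti ℂ p v)
  rw [exteriorPower.map_apply_ιMulti]
  exact ((LinearMap.mulLeft ℂ (ExteriorAlgebra.ι ℂ a)).compMultilinearMap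
    (ExteriorAlgebra.ιMulti ℂ p).toMultilinearMap).map_eq_of_forall_sub_mem (ℂ ∙ a)
    (fun v i k hk => ExteriorAlgebra.ι_mul_ιMulti_update_of_mem_span_singleton a v i hk)
    (fun i => by simpa using (Submodule.neg_mem _ (hπ (v i))))

lemma exists_range_wedgeMap_le [FiniteDimensional ℂ A] (p : ℕ) {a : A} (ha : a ≠ 0) :
    ∃ A' : Submodule ℂ A, Module.finrank ℂ A' = Module.finrank ℂ A - 1 ∧
      LinearMap.range (wedgeMap p a) ≤
        LinearMap.range (wedgeMap p a ∘ₗ exteriorPower.map p A'.subtype) := by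
  obtain ⟨A', hA'⟩ := Submodule.exists_isCompl (ℂ ∙ a)
  refine ⟨A', ?_, ?_⟩
  · rw [← Submodule.finrank_add_eq_of_isCompl hA', finrank_span_singleton ha]
    omega
  · have h := wedgeMap_comp_map_of_sub_mem p a (Submodule.sub_projection_mem hA'.symm)
    calc LinearMap.range (wedgeMap p a)
        = LinearMap.range (wedgeMap p a ∘ₗ exteriorPower.map p (A'.projection _ hA'.symm)) :=
          congrArg LinearMap.range h.symm
      _ = LinearMap.range ((wedgeMap p a ∘ₗ exteriorPower.map p A'.subtype) ∘ₗ
            exteriorPower.map p (A'.projectionOnto _ hA'.symm)) := by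
          rw [Submodule.projection, exteriorPower.map_comp]
          rfl
      _ ≤ _ := LinearMap.range_comp_le_range _ _

theorem _root_.TensorProduct.exists_sum_tmul_tmul_eq {R M N P : Type*} [CommSemiring R]
    [AddCommMonoid M] [Module R M] [AddCommMonoid N] [Module R N] [AddCommMonoid P] [Module R P]
    (t : M ⊗[R] (N ⊗[R] P)) :
    ∃ (k : ℕ) (x : Fin k → M) (y : Fin k → N) (z : Fin k → P),
      t = ∑ i, x i ⊗ₜ[R] (y i ⊗ₜ[R] z i) := by
  induction t with
  | zero => exact ⟨0, Fin.elim0, Fin.elim0, Fin.elim0, by simp⟩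
  | tmul x t =>
    obtain ⟨k, y, z, rfl⟩ := TensorProduct.exists_sum_tmul_eq t
    exact ⟨k, fun _ => x, y, z, TensorProduct.tmul_sum _ _ _⟩
  | add t t' ht ht' =>
    obtain ⟨k, x, y, z, rfl⟩ := ht
    obtain ⟨k', x', y', z', rfl⟩ := ht'
    exact ⟨k + k', Fin.addCases x x', Fin.addCases y y', Fin.addCases z z',
      by simp [Fin.sum_univ_add]⟩

lemma exists_eq_sum_tensorRank (T : A ⊗[ℂ] (B ⊗[ℂ] C)) :
    ∃ (x : Fin (tensorRank T) → A) (y : Fin (tensorRank T) → B) (z : Fin (tensorRank T) → C),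
      T = ∑ i, x i ⊗ₜ[ℂ] (y i ⊗ₜ[ℂ] z i) :=
  Nat.sInf_mem (TensorProduct.exists_sum_tmul_tmul_eq T)

lemma flatB_add (T T' : A ⊗[ℂ] (B ⊗[ℂ] C)) : flatB (T + T') = flatB T + flatB T' := by
  simp only [flatB, map_add]

lemma TAp_add (p : ℕ) (T T' : A ⊗[ℂ] (B ⊗[ℂ] C)) :
    TAp p (T + T') = TAp p T + TAp p T' := by
  simp only [TAp, flatB_add, TensorProduct.map_add_left, LinearMap.comp_add]

lemma TAp_zero (p : ℕ) : TAp p (0 : A ⊗[ℂ] (B ⊗[ℂ] C)) = 0 := by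
  simp [TAp, flatB]

lemma TAp_sum (p : ℕ) {ι : Type*} (s : Finset ι) (T : ι → A ⊗[ℂ] (B ⊗[ℂ] C)) :
    TAp p (∑ i ∈ s, T i) = ∑ i ∈ s, TAp p (T i) :=
  map_sum ({ toFun := TAp p, map_zero' := TAp_zero p, map_add' := TAp_add p } :
    A ⊗[ℂ] (B ⊗[ℂ] C) →+ _) T s

lemma TAp_tmul_tmul (p : ℕ) (a : A) (b : B) (c : C) :
    TAp p (a ⊗ₜ[ℂ] (b ⊗ₜ[ℂ] c)) =
      (TensorProduct.mk ℂ (ExtPow (p + 1) A) C).flip c ∘ₗ wedgeMap p a ∘ₗ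
        (TensorProduct.lid ℂ (ExtPow p A)).toLinearMap ∘ₗ
        LinearMap.rTensor (ExtPow p A) (Module.Dual.eval ℂ B b) := by
  refine TensorProduct.ext' fun β w => ?_
  simp [TAp, flatB, smul_tmul']

lemma rank_TAp_tmul_tmul_le [FiniteDimensional ℂ A] (p : ℕ) (a : A) (b : B) (c : C) :
    LinearMap.rank (TAp p (a ⊗ₜ[ℂ] (b ⊗ₜ[ℂ] c))) ≤ ((Module.finrank ℂ A - 1).choose p : ℕ) := by
  rcases eq_or_ne a 0 with rfl | ha
  · simp [TAp_zero]
  obtain ⟨A', hA', hle⟩ := exists_range_wedgeMap_le p ha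
  set F := (TensorProduct.mk ℂ (ExtPow (p + 1) A) C).flip c
  have hrange : LinearMap.range (TAp p (a ⊗ₜ[ℂ] (b ⊗ₜ[ℂ] c))) ≤
      LinearMap.range (F ∘ₗ wedgeMap p a ∘ₗ exteriorPower.map p A'.subtype) := by
    rw [TAp_tmul_tmul]
    calc _ ≤ LinearMap.range (F ∘ₗ wedgeMap p a) := LinearMap.range_comp_le_range _ _
      _ = (LinearMap.range (wedgeMap p a)).map F := LinearMap.range_comp _ _
      _ ≤ (LinearMap.range (wedgeMap p a ∘ₗ exteriorPower.map p A'.subtype)).map F :=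
          Submodule.map_mono hle
      _ = _ := (LinearMap.range_comp _ _).symm
  calc _ ≤ LinearMap.rank (F ∘ₗ wedgeMap p a ∘ₗ exteriorPower.map p A'.subtype) :=
        Submodule.rank_mono hrange
    _ = Module.finrank ℂ (LinearMap.range
          (F ∘ₗ wedgeMap p a ∘ₗ exteriorPower.map p A'.subtype)) :=
        (Module.finrank_eq_rank _ _).symm
    _ ≤ Module.finrank ℂ (⋀[ℂ]^p A') := by exact_mod_cast LinearMap.finrank_range_le _
    _ = _ := by rw [exteriorPower.finrank_eq, hA']

theorem rank_TAp_le_general [FiniteDimensional ℂ A]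
    (a p r : ℕ) (ha : Module.finrank ℂ A = a)
    (T : A ⊗[ℂ] (B ⊗[ℂ] C)) (hT : tensorRank T ≤ r) :
    Module.finrank ℂ (LinearMap.range (TAp p T)) ≤ r * Nat.choose (a-1) p := by
  -- without this, matching the additive structures of the sum of maps below times out
  let (k : ℕ) : AddCommGroup (ExtPow k A) := Submodule.addCommGroup _
  obtain ⟨x, y, z, hxyz⟩ := exists_eq_sum_tensorRank T
  have hrank : LinearMap.rank (TAp p T) ≤ (tensorRank T * (a - 1).choose p : ℕ) :=
    calc LinearMap.rank (TAp p T)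
        = LinearMap.rank (∑ i, TAp p (x i ⊗ₜ[ℂ] (y i ⊗ₜ[ℂ] z i))) := by rw [← TAp_sum, ← hxyz]
      _ ≤ ∑ i, LinearMap.rank (TAp p (x i ⊗ₜ[ℂ] (y i ⊗ₜ[ℂ] z i))) :=
          LinearMap.rank_finsetSum_le _ _
      _ ≤ ∑ _i : Fin (tensorRank T), (((a - 1).choose p : ℕ) : Cardinal) :=
          Finset.sum_le_sum fun i _ => ha ▸ rank_TAp_tmul_tmul_le p _ _ _
      _ = _ := by simp
  calc Module.finrank ℂ (LinearMap.range (TAp p T)) ≤ tensorRank T * (a - 1).choose p :=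
        (Cardinal.toNat_le_toNat hrank Cardinal.natCast_lt_aleph0).trans_eq
          (Cardinal.toNat_natCast _)
    _ ≤ r * (a - 1).choose p := Nat.mul_le_mul_right _ hT

/-- If `T ∈ A ⊗ B ⊗ C` has rank at most `r`, then `rank(T_A^{∧p}) ≤ r · C(a-1, p)`
where `a = dim A`. -/
theorem rank_TAp_le [FiniteDimensional ℂ A] [FiniteDimensional ℂ B] [FiniteDimensional ℂ C]
    (a p r : ℕ) (ha : Module.finrank ℂ A = a)
    (T : A ⊗[ℂ] (B ⊗[ℂ] C)) (hT : tensorRank T ≤ r) :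
    Module.finrank ℂ (LinearMap.range (TAp p T)) ≤ r * Nat.choose (a-1) p :=
  rank_TAp_le_general a p r ha T hT

end LO
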